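/- arXiv:1604.01810 — 3 statements merged into one kernel-verified Lean document; each statement's English description precedes it below -/
import Mathlib

section
/- Let A : X → Y be a bounded operator between Banach spaces and Z a closed subspace of X of finite codimension. With R(A) = sup { dist(y**, Y) : y** ∈ weak*-closure of A(B_X) in Y** }, one has R(A|_Z) ≥ R(A)/3. In particular, if A fails to be weakly compact, then inf over all finite-codimensional closed subspaces Z of X of R(A|_Z) is strictly positive. -/
noncomputable section
open Filter Metric NormedSpace

/-- The canonical map to `F` with its weak topology. -/
def toWeakSp (F : Type*) [NormedAddCommGroup F] [NormedSpace ℝ F] : F → WeakSpace ℝ F :=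
  fun y => y

/-- The canonical map from the bidual to the bidual with its weak-star topology. -/
def toWeakStar (F : Type*) [NormedAddCommGroup F] [NormedSpace ℝ F] :
    StrongDual ℝ (StrongDual ℝ F) → WeakDual ℝ (StrongDual ℝ F) := fun y => y

/-- The canonical map from the bidual with its weak-star topology to the normed bidual. -/
def ofWeakStar (F : Type*) [NormedAddCommGroup F] [NormedSpace ℝ F] :
    WeakDual ℝ (StrongDual ℝ F) → StrongDual ℝ (StrongDual ℝ F) := fun y => y

/-- An operator is weakly compact if the image of the closed unit ball is relatively
weakly compact. -/
def WCompact {E F : Type*} [NormedAddCommGroup E] [NormedSpace ℝ E]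
    [NormedAddCommGroup F] [NormedSpace ℝ F] (T : E →L[ℝ] F) : Prop :=
  IsCompact (closure (toWeakSp F ∘ T '' Metric.closedBall 0 1))

/-- `RConst T = sup { dist(y**, F) : y** ∈ weak*-closure of T(B_E) in F** }`. -/
def RConst {E F : Type*} [NormedAddCommGroup E] [NormedSpace ℝ E]
    [NormedAddCommGroup F] [NormedSpace ℝ F] (T : E →L[ℝ] F) : ℝ :=
  sSup ((fun z => Metric.infDist (ofWeakStar F z) (Set.range (inclusionInDoubleDual ℝ F))) ''
    closure (toWeakStar F ∘ inclusionInDoubleDual ℝ F ∘ T '' Metric.closedBall 0 1))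

open Topology
open scoped Pointwise

/-! If `p` is a weak*-limit of `A x` with `‖x‖ ≤ 1`, pass to an ultrafilter along which the classes
of `x` in the finite-dimensional space `X ⧸ Z` converge to a class of norm `≤ 1`, lifted to some
`x₀` with `‖x₀‖ ≤ 3/2`. Then `x - x₀` is within `o(1)` of some `ζ x ∈ Z`, eventually of norm `≤ 3`,
so `p = A x₀ + 3 u` with `u` in the weak*-closure of `A(B_Z)`; as `A x₀ ∈ Y`,
`dist(p, Y) = 3 dist(u, Y) ≤ 3 R(A|_Z)`. If `R(A) = 0`, the weak*-closure of `A(B_X)` lies in `Y`,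
and Banach–Alaoglu transported along the weak-to-weak* embedding of `Y` makes `A` weakly compact. -/

theorem exists_ultrafilter_tendsto_of_mem_closure_image {α β : Type*} [TopologicalSpace β]
    {f : α → β} {s : Set α} {b : β} (h : b ∈ closure (f '' s)) :
    ∃ U : Ultrafilter α, s ∈ U ∧ Tendsto f U (𝓝 b) := by
  obtain ⟨g, hg, hgb⟩ := mem_closure_iff_ultrafilter.1 h
  refine ⟨.ofComapInfPrincipal hg, Ultrafilter.ofComapInfPrincipal_mem hg, ?_⟩
  rwa [← Ultrafilter.ofComapInfPrincipal_eq_of_map hg] at hgb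

theorem Submodule.exists_mem_norm_sub_le_two_mul_norm_mkQ {R E : Type*} [Ring R]
    [NormedAddCommGroup E] [Module R E] (Z : Submodule R E) [IsClosed (Z : Set E)] (v : E) :
    ∃ z ∈ Z, ‖v - z‖ ≤ 2 * ‖Z.mkQ v‖ := by
  rcases (norm_nonneg (Z.mkQ v)).eq_or_lt with h | h
  · exact ⟨v, (Submodule.Quotient.mk_eq_zero Z).1 (norm_eq_zero.1 h.symm), by simp⟩
  · obtain ⟨m, hm, hmv⟩ := Submodule.Quotient.norm_mk_lt (Z.mkQ v) h
    refine ⟨v - m, ?_, ?_⟩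
    · rw [← Submodule.Quotient.mk_eq_zero, Submodule.Quotient.mk_sub, hm, Submodule.mkQ_apply,
        sub_self]
    · rw [sub_sub_cancel]
      linarith

theorem Submodule.infDist_add_smul_of_mem {𝕜 E : Type*} [NormedField 𝕜]
    [SeminormedAddCommGroup E] [NormedSpace 𝕜 E] (S : Submodule 𝕜 E) {v : E} (hv : v ∈ S)
    (c : 𝕜) (u : E) :
    infDist (v + c • u) S = ‖c‖ * infDist u S := by
  change infDist _ (S.toAddSubgroup : Set E) = ‖c‖ * infDist _ (S.toAddSubgroup : Set E)
  rw [← QuotientAddGroup.norm_mk, ← QuotientAddGroup.norm_mk]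
  change ‖S.mkQ (v + c • u)‖ = ‖c‖ * ‖S.mkQ u‖
  rw [map_add, map_smul, Submodule.mkQ_apply, (Submodule.Quotient.mk_eq_zero S).2 hv, zero_add,
    norm_smul]

section Decomposition

variable {X W : Type*} [NormedAddCommGroup X] [NormedSpace ℝ X] [AddCommGroup W] [Module ℝ W]
  [TopologicalSpace W] [IsTopologicalAddGroup W] [ContinuousConstSMul ℝ W]

theorem closure_image_closedBall_subset_range_add_three_smul (f : X →L[ℝ] W)
    (Z : Submodule ℝ X) [IsClosed (Z : Set X)] [FiniteDimensional ℝ (X ⧸ Z)] :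
    closure (f '' closedBall 0 1) ⊆
      Set.range f + (3 : ℝ) • closure ((f.comp Z.subtypeL) '' closedBall 0 1) := by
  intro p hp
  obtain ⟨U, hBU, hfU⟩ := exists_ultrafilter_tendsto_of_mem_closure_image hp
  have hBQ : closedBall (0 : X ⧸ Z) 1 ∈ U.map Z.mkQ :=
    Ultrafilter.mem_map.2 <| Filter.mem_of_superset hBU fun x hx => mem_closedBall_zero_iff.2 <|
      (Submodule.Quotient.norm_mk_le Z x).trans (mem_closedBall_zero_iff.1 hx)
  obtain ⟨w, hw, hUw⟩ := (isCompact_closedBall (0 : X ⧸ Z) 1).ultrafilter_le_nhds (U.map Z.mkQ)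
    (le_principal_iff.2 hBQ)
  obtain ⟨x₀, rfl, hx₀⟩ := Submodule.Quotient.norm_mk_lt w one_half_pos
  choose ζ hζZ hζ using fun x => Z.exists_mem_norm_sub_le_two_mul_norm_mkQ (x - x₀)
  have herr : Tendsto (fun x => x - x₀ - ζ x) U (𝓝 0) := by
    refine squeeze_zero_norm hζ ?_
    simpa using (tendsto_iff_norm_sub_tendsto_zero.1 hUw).const_mul 2
  have hlim : Tendsto (fun x => (3 : ℝ)⁻¹ • f (ζ x)) U (𝓝 ((3 : ℝ)⁻¹ • (p - f x₀))) := by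
    have hf0 : Tendsto (fun x => f (x - x₀ - ζ x)) U (𝓝 0) := by
      simpa only [map_zero, Function.comp_def] using (f.continuous.tendsto 0).comp herr
    convert ((hfU.sub_const (f x₀)).sub hf0).const_smul (3 : ℝ)⁻¹ using 2 with x
    · rw [map_sub, map_sub, sub_sub_cancel]
    · rw [sub_zero]
  have hζ_le : ∀ᶠ x in U, ‖ζ x‖ ≤ 3 := by
    filter_upwards [hBU, (tendsto_zero_iff_norm_tendsto_zero.1 herr).eventually
      (eventually_le_nhds one_half_pos)] with x hx hxe
    have hw1 := mem_closedBall_zero_iff.1 hw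
    have hx1 := mem_closedBall_zero_iff.1 hx
    calc ‖ζ x‖ = ‖x - x₀ - (x - x₀ - ζ x)‖ := by rw [sub_sub_cancel]
      _ ≤ ‖x‖ + ‖x₀‖ + ‖x - x₀ - ζ x‖ := (norm_sub_le _ _).trans (by gcongr; exact norm_sub_le _ _)
      _ ≤ 3 := by linarith
  refine ⟨f x₀, ⟨x₀, rfl⟩, _, Set.smul_mem_smul_set (mem_closure_of_tendsto hlim ?_),
    by rw [smul_inv_smul₀ three_ne_zero]; exact add_sub_cancel _ _⟩
  filter_upwards [hζ_le] with x hx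
  refine ⟨⟨(3 : ℝ)⁻¹ • ζ x, Z.smul_mem _ (hζZ x)⟩, ?_, by simp⟩
  rw [mem_closedBall_zero_iff, Submodule.coe_norm, norm_smul, norm_inv, Real.norm_ofNat]
  linarith

end Decomposition

section RConst

variable {E F : Type*} [NormedAddCommGroup E] [NormedSpace ℝ E] [NormedAddCommGroup F]
  [NormedSpace ℝ F]

def toWeakStarBidual (T : E →L[ℝ] F) : E →L[ℝ] WeakDual ℝ (StrongDual ℝ F) :=
  Dual.continuousLinearMapToWeakDual.comp ((inclusionInDoubleDual ℝ F).comp T)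

theorem RConst_eq_sSup (T : E →L[ℝ] F) :
    RConst T = sSup ((fun z => infDist (ofWeakStar F z) (Set.range (inclusionInDoubleDual ℝ F))) ''
      closure (toWeakStarBidual T '' closedBall 0 1)) :=
  rfl

theorem norm_ofWeakStar_le_of_mem_closure (T : E →L[ℝ] F) {p : WeakDual ℝ (StrongDual ℝ F)}
    (hp : p ∈ closure (toWeakStarBidual T '' closedBall 0 1)) : ‖ofWeakStar F p‖ ≤ ‖T‖ := by
  refine mem_closedBall_zero_iff.1 (closure_minimal ?_ (WeakDual.isClosed_closedBall 0 ‖T‖) hp)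
  rintro _ ⟨x, hx, rfl⟩
  exact mem_closedBall_zero_iff.2 <|
    (double_dual_bound ℝ F (T x)).trans (T.unit_le_opNorm x (mem_closedBall_zero_iff.1 hx))

theorem infDist_le_RConst (T : E →L[ℝ] F) {p : WeakDual ℝ (StrongDual ℝ F)}
    (hp : p ∈ closure (toWeakStarBidual T '' closedBall 0 1)) :
    infDist (ofWeakStar F p) (Set.range (inclusionInDoubleDual ℝ F)) ≤ RConst T := by
  refine le_csSup ⟨‖T‖, ?_⟩ ⟨p, hp, rfl⟩
  rintro _ ⟨q, hq, rfl⟩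
  calc infDist (ofWeakStar F q) (Set.range (inclusionInDoubleDual ℝ F))
      ≤ dist (ofWeakStar F q) (inclusionInDoubleDual ℝ F 0) := infDist_le_dist_of_mem ⟨0, rfl⟩
    _ ≤ ‖T‖ := by
      rw [map_zero, dist_zero_right (E := StrongDual ℝ (StrongDual ℝ F))]
      exact norm_ofWeakStar_le_of_mem_closure T hq

theorem RConst_nonneg (T : E →L[ℝ] F) : 0 ≤ RConst T :=
  infDist_nonneg.trans <|
    infDist_le_RConst T (subset_closure ⟨0, mem_closedBall_self zero_le_one, rfl⟩)

theorem RConst_le_three_mul_RConst_comp_subtypeL (T : E →L[ℝ] F) (Z : Submodule ℝ E)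
    [IsClosed (Z : Set E)] [FiniteDimensional ℝ (E ⧸ Z)] :
    RConst T ≤ 3 * RConst (T.comp Z.subtypeL) := by
  rw [RConst_eq_sSup]
  refine Real.sSup_le ?_ (mul_nonneg zero_le_three (RConst_nonneg _))
  rintro _ ⟨p, hp, rfl⟩
  have hdecomp := closure_image_closedBall_subset_range_add_three_smul
    (W := WeakDual ℝ (StrongDual ℝ F)) (toWeakStarBidual T) Z
  obtain ⟨_, ⟨x₀, rfl⟩, _, ⟨u, hu, rfl⟩, hpu⟩ := hdecomp hp
  subst hpu
  calc infDist (ofWeakStar F (toWeakStarBidual T x₀ + (3 : ℝ) • u))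
        (Set.range (inclusionInDoubleDual ℝ F))
      = 3 * infDist (ofWeakStar F u) (Set.range (inclusionInDoubleDual ℝ F)) := by
        have h := (LinearMap.range (inclusionInDoubleDual ℝ F).toLinearMap).infDist_add_smul_of_mem
          (LinearMap.mem_range_self _ (T x₀)) (3 : ℝ) (ofWeakStar F u)
        rwa [Real.norm_ofNat, LinearMap.coe_range] at h
    _ ≤ 3 * RConst (T.comp Z.subtypeL) := by gcongr; exact infDist_le_RConst _ hu

theorem WCompact_of_RConst_eq_zero [CompleteSpace F] (T : E →L[ℝ] F) (h : RConst T = 0) :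
    WCompact T := by
  refine isCompact_closure_of_isBounded ℝ F _ ?_ ?_
  · exact T.lipschitz.isBounded_image isBounded_closedBall
  · have himage : inclusionInDoubleDualWeak ℝ F '' (toWeakSp F ∘ T '' closedBall 0 1) =
        toWeakStarBidual T '' closedBall 0 1 := by
      rw [← Set.image_comp]; rfl
    have hiso : Isometry (inclusionInDoubleDual ℝ F) :=
      (inclusionInDoubleDualLi ℝ (E := F)).isometry
    have hclosed : IsClosed (Set.range (inclusionInDoubleDual ℝ F)) :=
      hiso.isClosedEmbedding.isClosed_range
    intro p hp
    rw [himage] at hp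
    have hdist : infDist (ofWeakStar F p) (Set.range (inclusionInDoubleDual ℝ F)) = 0 :=
      le_antisymm (h ▸ infDist_le_RConst T hp) infDist_nonneg
    obtain ⟨y, hy⟩ := (hclosed.mem_iff_infDist_zero (Set.range_nonempty _)).2 hdist
    exact ⟨y, hy⟩

end RConst

theorem statement1_general {X Y : Type*} [NormedAddCommGroup X] [NormedSpace ℝ X]
    [NormedAddCommGroup Y] [NormedSpace ℝ Y] [CompleteSpace Y] (A : X →L[ℝ] Y) :
    (∀ Z : Submodule ℝ X, IsClosed (Z : Set X) → FiniteDimensional ℝ (X ⧸ Z) →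
      RConst A / 3 ≤ RConst (A.comp Z.subtypeL)) ∧
    (¬ WCompact A →
      0 < sInf {r : ℝ | ∃ Z : Submodule ℝ X, IsClosed (Z : Set X) ∧
        FiniteDimensional ℝ (X ⧸ Z) ∧ r = RConst (A.comp Z.subtypeL)}) := by
  have hrestrict : ∀ Z : Submodule ℝ X, IsClosed (Z : Set X) → FiniteDimensional ℝ (X ⧸ Z) →
      RConst A / 3 ≤ RConst (A.comp Z.subtypeL) := fun Z _ _ => by
    linarith [RConst_le_three_mul_RConst_comp_subtypeL A Z]
  refine ⟨hrestrict, fun hA => ?_⟩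
  have hpos : 0 < RConst A :=
    (RConst_nonneg A).lt_of_ne fun h => hA (WCompact_of_RConst_eq_zero A h.symm)
  refine (div_pos hpos three_pos).trans_le <|
    le_csInf ⟨_, ⊤, Submodule.top_coe (R := ℝ) (M := X) ▸ isClosed_univ, inferInstance, rfl⟩ ?_
  rintro _ ⟨Z, hZ, hfd, rfl⟩
  exact hrestrict Z hZ hfd

theorem statement1 {X Y : Type*} [NormedAddCommGroup X] [NormedSpace ℝ X] [CompleteSpace X]
    [NormedAddCommGroup Y] [NormedSpace ℝ Y] [CompleteSpace Y] (A : X →L[ℝ] Y) :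
    (∀ Z : Submodule ℝ X, IsClosed (Z : Set X) → FiniteDimensional ℝ (X ⧸ Z) →
      RConst A / 3 ≤ RConst (A.comp Z.subtypeL)) ∧
    (¬ WCompact A →
      0 < sInf {r : ℝ | ∃ Z : Submodule ℝ X, IsClosed (Z : Set X) ∧
        FiniteDimensional ℝ (X ⧸ Z) ∧ r = RConst (A.comp Z.subtypeL)}) :=
  statement1_general A
end
end

section
/- Let A : X → Y be a uniformly convex operator with ‖A‖ ≤ 1 and modulus δ, let D ≥ 1 and n ∈ ℕ, and let B_{2^n} be the binary tree of depth 2^n with the graph metric d. Suppose f : B_{2^n} → X satisfies D^{-1} d(s,t) ≤ ‖Af(s) − Af(t)‖ ≤ ‖f(s) − f(t)‖ ≤ d(s,t) for all s, t. Then there exist leaves t₀, t₁ ∈ {0,1}^{2^n} whose first coordinates are 0 and 1 respectively such that ‖f(t₀) − f(∅)‖ ≤ 2^n (1 − δ(1/(2D)))^n and ‖f(t₁) − f(∅)‖ ≤ 2^n (1 − δ(1/(2D)))^n. -/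
noncomputable section

/-- The modulus of convexity of an operator `A` with `‖A‖ ≤ 1`:
`δ(ε) = 1 − sup{ ‖(x₁+x₂)/2‖ : x₁,x₂ ∈ B_X, ‖(Ax₁ − Ax₂)/2‖ ≥ ε }`. -/
def convMod {X Y : Type*} [NormedAddCommGroup X] [NormedSpace ℝ X]
    [NormedAddCommGroup Y] [NormedSpace ℝ Y] (A : X →L[ℝ] Y) (ε : ℝ) : ℝ :=
  1 - sSup {r : ℝ | ∃ x₁ x₂ : X, ‖x₁‖ ≤ 1 ∧ ‖x₂‖ ≤ 1 ∧ ε ≤ ‖A x₁ - A x₂‖ / 2 ∧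
    r = ‖x₁ + x₂‖ / 2}

/-- An operator is uniformly convex if its modulus of convexity is positive everywhere. -/
def UniformlyConvexOp {X Y : Type*} [NormedAddCommGroup X] [NormedSpace ℝ X]
    [NormedAddCommGroup Y] [NormedSpace ℝ Y] (A : X →L[ℝ] Y) : Prop :=
  ∀ ε : ℝ, 0 < ε → 0 < convMod A ε

/-- Longest common prefix of two bit strings. -/
def lcpBool : List Bool → List Bool → List Bool
  | a :: s, b :: t => if a = b then a :: lcpBool s t else []
  | _, _ => []

/-- The graph distance on the binary tree of finite bit strings:
`d(s,t) = |s| + |t| − 2|lcp(s,t)|`. -/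
def treeDist (s t : List Bool) : ℕ :=
  (s.length - (lcpBool s t).length) + (t.length - (lcpBool s t).length)

/-! ### Auxiliary lemmas -/

lemma lcpBool_append (u x y : List Bool) :
    lcpBool (u ++ x) (u ++ y) = u ++ lcpBool x y := by
  induction u with
  | nil => simp
  | cons a u ih => simp [lcpBool, ih]

lemma lcpBool_self_append (s r : List Bool) : lcpBool s (s ++ r) = s := by
  have h := lcpBool_append s [] r
  simpa [lcpBool] using h

lemma treeDist_snoc (s : List Bool) (b : Bool) : treeDist s (s ++ [b]) = 1 := by
  have h : lcpBool s (s ++ [b]) = s := lcpBool_self_append s [b]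
  simp [treeDist, h]

lemma mem_le_oneSubConvMod {X Y : Type*} [NormedAddCommGroup X] [NormedSpace ℝ X]
    [NormedAddCommGroup Y] [NormedSpace ℝ Y] (A : X →L[ℝ] Y) (ε : ℝ)
    (x₁ x₂ : X) (h1 : ‖x₁‖ ≤ 1) (h2 : ‖x₂‖ ≤ 1) (h3 : ε ≤ ‖A x₁ - A x₂‖ / 2) :
    ‖x₁ + x₂‖ / 2 ≤ 1 - convMod A ε := by
  have hbdd : BddAbove {r : ℝ | ∃ y₁ y₂ : X, ‖y₁‖ ≤ 1 ∧ ‖y₂‖ ≤ 1 ∧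
      ε ≤ ‖A y₁ - A y₂‖ / 2 ∧ r = ‖y₁ + y₂‖ / 2} := by
    refine ⟨1, ?_⟩
    rintro r ⟨y₁, y₂, hy1, hy2, -, rfl⟩
    have := norm_add_le y₁ y₂
    linarith
  have hmem : ‖x₁ + x₂‖ / 2 ∈ {r : ℝ | ∃ y₁ y₂ : X, ‖y₁‖ ≤ 1 ∧ ‖y₂‖ ≤ 1 ∧
      ε ≤ ‖A y₁ - A y₂‖ / 2 ∧ r = ‖y₁ + y₂‖ / 2} := ⟨x₁, x₂, h1, h2, h3, rfl⟩
  have hle := le_csSup hbdd hmem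
  unfold convMod
  linarith

lemma oneSubConvMod_le_one {X Y : Type*} [NormedAddCommGroup X] [NormedSpace ℝ X]
    [NormedAddCommGroup Y] [NormedSpace ℝ Y] (A : X →L[ℝ] Y) (ε : ℝ)
    (x₁ x₂ : X) (h1 : ‖x₁‖ ≤ 1) (h2 : ‖x₂‖ ≤ 1) (h3 : ε ≤ ‖A x₁ - A x₂‖ / 2) :
    1 - convMod A ε ≤ 1 := by
  have hne : Set.Nonempty {r : ℝ | ∃ y₁ y₂ : X, ‖y₁‖ ≤ 1 ∧ ‖y₂‖ ≤ 1 ∧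
      ε ≤ ‖A y₁ - A y₂‖ / 2 ∧ r = ‖y₁ + y₂‖ / 2} :=
    ⟨‖x₁ + x₂‖ / 2, x₁, x₂, h1, h2, h3, rfl⟩
  have hub : ∀ r ∈ {r : ℝ | ∃ y₁ y₂ : X, ‖y₁‖ ≤ 1 ∧ ‖y₂‖ ≤ 1 ∧
      ε ≤ ‖A y₁ - A y₂‖ / 2 ∧ r = ‖y₁ + y₂‖ / 2}, r ≤ 1 := by
    rintro r ⟨y₁, y₂, hy1, hy2, -, rfl⟩
    have := norm_add_le y₁ y₂
    linarith
  have := csSup_le hne hub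
  unfold convMod
  linarith

/-- The key convexity step: if `p, q` both have norm at most `M` and their `A`-images
are at distance at least `M/D`, then `‖p + q‖ ≤ 2 M (1 − δ(1/(2D)))`. -/
lemma conv_core {X Y : Type*} [NormedAddCommGroup X] [NormedSpace ℝ X]
    [NormedAddCommGroup Y] [NormedSpace ℝ Y] (A : X →L[ℝ] Y) {D : ℝ} (hD : 0 < D)
    {p q : X} {M : ℝ} (hM : 0 < M) (hp : ‖p‖ ≤ M) (hq : ‖q‖ ≤ M)
    (hA : M / D ≤ ‖A p - A q‖) :
    ‖p + q‖ ≤ 2 * M * (1 - convMod A (1 / (2 * D))) := by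
  have hnp : ‖M⁻¹ • p‖ = ‖p‖ / M := by
    rw [norm_smul, Real.norm_eq_abs, abs_inv, abs_of_pos hM]; ring
  have hnq : ‖M⁻¹ • q‖ = ‖q‖ / M := by
    rw [norm_smul, Real.norm_eq_abs, abs_inv, abs_of_pos hM]; ring
  have h1 : ‖M⁻¹ • p‖ ≤ 1 := by rw [hnp]; exact div_le_one_of_le₀ hp hM.le
  have h2 : ‖M⁻¹ • q‖ ≤ 1 := by rw [hnq]; exact div_le_one_of_le₀ hq hM.le
  have hdiff : A (M⁻¹ • p) - A (M⁻¹ • q) = M⁻¹ • (A p - A q) := by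
    rw [map_smul, map_smul, smul_sub]
  have hnd : ‖A (M⁻¹ • p) - A (M⁻¹ • q)‖ = ‖A p - A q‖ / M := by
    rw [hdiff, norm_smul, Real.norm_eq_abs, abs_inv, abs_of_pos hM]; ring
  have h3 : 1 / (2 * D) ≤ ‖A (M⁻¹ • p) - A (M⁻¹ • q)‖ / 2 := by
    rw [hnd]
    have hMD : M / D / M = 1 / D := by
      rw [div_div, mul_comm D M, ← div_div, div_self hM.ne']
    have hdd : 1 / D ≤ ‖A p - A q‖ / M := by
      rw [← hMD]; exact div_le_div_of_nonneg_right hA hM.le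
    have he : 1 / (2 * D) = (1 / D) / 2 := by ring
    linarith
  have hres := mem_le_oneSubConvMod A (1 / (2 * D)) _ _ h1 h2 h3
  have hsum : ‖M⁻¹ • p + M⁻¹ • q‖ = ‖p + q‖ / M := by
    rw [← smul_add, norm_smul, Real.norm_eq_abs, abs_inv, abs_of_pos hM]; ring
  rw [hsum] at hres
  have h2M : (0:ℝ) < 2 * M := by linarith
  have hmul := mul_le_mul_of_nonneg_left hres h2M.le
  have heq : 2 * M * (‖p + q‖ / M / 2) = ‖p + q‖ := by field_simp
  linarith [heq ▸ hmul]

theorem statement8 {X Y : Type*} [NormedAddCommGroup X] [NormedSpace ℝ X] [CompleteSpace X]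
    [NormedAddCommGroup Y] [NormedSpace ℝ Y] [CompleteSpace Y] (A : X →L[ℝ] Y)
    (hA : ‖A‖ ≤ 1) (hconv : UniformlyConvexOp A) (D : ℝ) (hD : 1 ≤ D) (n : ℕ)
    (f : List Bool → X)
    (hf : ∀ s t : List Bool, s.length ≤ 2 ^ n → t.length ≤ 2 ^ n →
      (1 / D) * (treeDist s t : ℝ) ≤ ‖A (f s) - A (f t)‖ ∧
      ‖A (f s) - A (f t)‖ ≤ ‖f s - f t‖ ∧ ‖f s - f t‖ ≤ (treeDist s t : ℝ)) :
    ∃ t₀ t₁ : List Bool, t₀.length = 2 ^ n ∧ t₁.length = 2 ^ n ∧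
      t₀.head? = some false ∧ t₁.head? = some true ∧
      ‖f t₀ - f []‖ ≤ 2 ^ n * (1 - convMod A (1 / (2 * D))) ^ n ∧
      ‖f t₁ - f []‖ ≤ 2 ^ n * (1 - convMod A (1 / (2 * D))) ^ n := by
  have hD0 : (0:ℝ) < D := lt_of_lt_of_le one_pos hD
  have hlen1 : (1:ℕ) ≤ 2 ^ n := Nat.one_le_two_pow
  obtain ⟨θ, hθdef⟩ : ∃ θ : ℝ, θ = 1 - convMod A (1 / (2 * D)) := ⟨_, rfl⟩
  -- basic facts about θ, using the pair ([], [false])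
  have hf0 := hf [] [false] (by simp) (by simpa using hlen1)
  have hdist01 : treeDist [] [false] = 1 := rfl
  rw [hdist01] at hf0
  have hx0le : ‖f [] - f [false]‖ ≤ 1 := by simpa using hf0.2.2
  have hAx0 : 1 / D ≤ ‖A (f []) - A (f [false])‖ := by simpa using hf0.1
  have hAx0' : 1 / D ≤ ‖A (f [] - f [false]) - A (0:X)‖ := by
    rw [map_zero, map_sub]; simpa using hAx0
  have hx0A : 1 / (2 * D) ≤ ‖A (f [] - f [false]) - A (0:X)‖ / 2 := by
    have he : 1 / (2 * D) = (1 / D) / 2 := by ring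
    linarith
  have hθpos : 0 < θ := by
    have hmem := mem_le_oneSubConvMod A (1 / (2 * D)) (f [] - f [false]) 0
      hx0le (by simp) hx0A
    rw [← hθdef] at hmem
    have hs : ‖f [] - f [false] + 0‖ = ‖f [] - f [false]‖ := by rw [add_zero]
    rw [hs] at hmem
    have hge : 1 / D ≤ ‖f [] - f [false]‖ := le_trans hAx0 hf0.2.1
    calc (0:ℝ) < (1 / D) / 2 := by positivity
      _ ≤ ‖f [] - f [false]‖ / 2 := by linarith
      _ ≤ θ := hmem
  have hθ1 : θ ≤ 1 := by
    rw [hθdef]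
    exact oneSubConvMod_le_one A (1 / (2 * D)) (f [] - f [false]) 0
      hx0le (by simp) hx0A
  have hθk1 : ∀ k : ℕ, θ ^ k ≤ 1 := fun k => pow_le_one₀ hθpos.le hθ1
  -- Key induction
  have key : ∀ k : ℕ, ∀ s : List Bool, ∀ b : Bool, s.length + 2 ^ k ≤ 2 ^ n →
      ∃ t : List Bool, (s ++ [b]) <+: t ∧ t.length = s.length + 2 ^ k ∧
        ‖f t - f s‖ ≤ 2 ^ k * θ ^ k := by
    intro k
    induction k with
    | zero =>
      intro s b hlen
      have hlen'' : s.length + 1 ≤ 2 ^ n := by simpa using hlen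
      refine ⟨s ++ [b], List.prefix_refl _, by simp, ?_⟩
      have hb := (hf s (s ++ [b]) (by omega) (by simpa using hlen'')).2.2
      rw [treeDist_snoc] at hb
      calc ‖f (s ++ [b]) - f s‖ = ‖f s - f (s ++ [b])‖ := norm_sub_rev _ _
        _ ≤ 1 := by simpa using hb
        _ = 2 ^ 0 * θ ^ 0 := by norm_num
    | succ k ih =>
      intro s b hlen
      have hpow : (2:ℕ) ^ (k + 1) = 2 ^ k + 2 ^ k := by rw [pow_succ]; omega
      have hlen' : s.length + 2 ^ k ≤ 2 ^ n := by
        have h := hlen; rw [hpow] at h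
        generalize (2:ℕ) ^ k = K at h ⊢
        generalize (2:ℕ) ^ n = N at h ⊢
        omega
      obtain ⟨u, hupre, hulen, hup⟩ := ih s b hlen'
      have hulen2 : u.length + 2 ^ k ≤ 2 ^ n := by
        have h := hlen; rw [hpow] at h
        rw [hulen]
        generalize (2:ℕ) ^ k = K at h ⊢
        generalize (2:ℕ) ^ n = N at h ⊢
        omega
      obtain ⟨t0, h0pre, h0len, h0⟩ := ih u false hulen2
      obtain ⟨t1, h1pre, h1len, h1⟩ := ih u true hulen2
      obtain ⟨r0, hr0⟩ := h0pre
      obtain ⟨r1, hr1⟩ := h1pre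
      have ht0 : t0 = u ++ false :: r0 := by rw [← hr0]; simp
      have ht1 : t1 = u ++ true :: r1 := by rw [← hr1]; simp
      have hlcp : lcpBool t0 t1 = u := by
        rw [ht0, ht1, lcpBool_append]
        simp [lcpBool]
      have hdist : treeDist t0 t1 = 2 ^ k + 2 ^ k := by
        unfold treeDist
        rw [hlcp, h0len, h1len]
        generalize (2:ℕ) ^ k = K
        omega
      have ht0len2 : t0.length ≤ 2 ^ n := by
        have h := hlen; rw [hpow] at h
        rw [h0len, hulen]
        generalize (2:ℕ) ^ k = K at h ⊢
        generalize (2:ℕ) ^ n = N at h ⊢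
        omega
      have ht1len2 : t1.length ≤ 2 ^ n := by
        have h := hlen; rw [hpow] at h
        rw [h1len, hulen]
        generalize (2:ℕ) ^ k = K at h ⊢
        generalize (2:ℕ) ^ n = N at h ⊢
        omega
      have hAd : (2:ℝ) * 2 ^ k / D ≤ ‖A (f t0) - A (f t1)‖ := by
        have h := (hf t0 t1 ht0len2 ht1len2).1
        rw [hdist] at h
        push_cast at h
        have he : (2:ℝ) * 2 ^ k / D = 1 / D * ((2:ℝ) ^ k + 2 ^ k) := by ring
        linarith
      set p := f u - f s with hpdef
      set q0 := f t0 - f u with hq0def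
      set q1 := f t1 - f u with hq1def
      have hmax : (2:ℝ) ^ k / D ≤ ‖A p - A q0‖ ∨ (2:ℝ) ^ k / D ≤ ‖A p - A q1‖ := by
        by_contra hcon
        push_neg at hcon
        have e1 : A q0 - A q1 = A (f t0) - A (f t1) := by
          rw [hq0def, hq1def, map_sub, map_sub]; abel
        have tri := dist_triangle (A q0) (A p) (A q1)
        simp only [dist_eq_norm] at tri
        rw [e1] at tri
        rw [norm_sub_rev (A q0) (A p)] at tri
        have he : (2:ℝ) * 2 ^ k / D = 2 ^ k / D + 2 ^ k / D := by ring
        linarith [hcon.1, hcon.2]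
      have hM : (0:ℝ) < 2 ^ k * θ ^ k := by positivity
      have hnum : (2:ℝ) ^ k * θ ^ k ≤ 2 ^ k := by
        have h1' := hθk1 k
        have h2' : (0:ℝ) ≤ (2:ℝ) ^ k := by positivity
        nlinarith
      have hMle : (2:ℝ) ^ k * θ ^ k / D ≤ 2 ^ k / D :=
        div_le_div_of_nonneg_right hnum hD0.le
      have hlenf : ∀ t : List Bool, t.length = u.length + 2 ^ k →
          t.length = s.length + 2 ^ (k + 1) := by
        intro t ht
        rw [ht, hulen, hpow, Nat.add_assoc]
      have hpre0 : (s ++ [b]) <+: t0 :=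
        hupre.trans ((List.prefix_append u [false]).trans ⟨r0, hr0⟩)
      have hpre1 : (s ++ [b]) <+: t1 :=
        hupre.trans ((List.prefix_append u [true]).trans ⟨r1, hr1⟩)
      rcases hmax with hc | hc
      · refine ⟨t0, hpre0, hlenf t0 h0len, ?_⟩
        have hcc := conv_core A hD0 hM hup h0 (le_trans hMle hc)
        rw [← hθdef] at hcc
        have hfe : f t0 - f s = p + q0 := by rw [hpdef, hq0def]; abel
        rw [hfe]
        calc ‖p + q0‖ ≤ 2 * (2 ^ k * θ ^ k) * θ := hcc
          _ = 2 ^ (k + 1) * θ ^ (k + 1) := by ring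
      · refine ⟨t1, hpre1, hlenf t1 h1len, ?_⟩
        have hcc := conv_core A hD0 hM hup h1 (le_trans hMle hc)
        rw [← hθdef] at hcc
        have hfe : f t1 - f s = p + q1 := by rw [hpdef, hq1def]; abel
        rw [hfe]
        calc ‖p + q1‖ ≤ 2 * (2 ^ k * θ ^ k) * θ := hcc
          _ = 2 ^ (k + 1) * θ ^ (k + 1) := by ring
  -- Conclusion
  obtain ⟨t0, hpre0, hlen0, hb0⟩ := key n [] false (by simp)
  obtain ⟨t1, hpre1, hlen1', hb1⟩ := key n [] true (by simp)
  obtain ⟨r0, hr0⟩ := hpre0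
  obtain ⟨r1, hr1⟩ := hpre1
  refine ⟨t0, t1, by simpa using hlen0, by simpa using hlen1', ?_, ?_, ?_, ?_⟩
  · rw [← hr0]; rfl
  · rw [← hr1]; rfl
  · rw [← hθdef]; exact hb0
  · rw [← hθdef]; exact hb1
end
end

section
/- Let A : X → Y be uniformly convex with ‖A‖ ≤ 1 and modulus δ, let D ≥ 1, and let D_n be the n-th diamond graph with graph metric d, with top vertex t = (1,…,1) and bottom vertex b = (0,…,0). If f : D_n → X satisfies D^{-1} d(s,s') ≤ ‖Af(s) − Af(s')‖ ≤ ‖f(s) − f(s')‖ ≤ d(s,s') for all s, s' ∈ D_n, then there exist adjacent vertices s, s' in D_n with ‖f(t) − f(b)‖ ≤ 2^n (1 − δ(1/D))^n ‖f(s) − f(s')‖. Consequently D ≥ (1 − δ(1/D))^{-n}, so the diamond graphs {D_n} do not factor through a uniformly convex operator. -/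
noncomputable section

/-- The number of coordinates at which two bit strings (of the same length) differ. -/
def hammingDist' (s t : List Bool) : ℕ :=
  ((List.zip s t).filter (fun p => p.1 ≠ p.2)).length

/-- Adjacency in the Hamming graph: same length and differing in exactly one coordinate. -/
def hammingAdj (s t : List Bool) : Prop :=
  s.length = t.length ∧ hammingDist' s t = 1

/-- The graph distance between `s` and `t` inside the vertex set `V`, with edges given by
Hamming adjacency. -/
noncomputable def graphDist (V : Set (List Bool)) (s t : List Bool) : ℕ :=
  sInf {k : ℕ | ∃ p : ℕ → List Bool, p 0 = s ∧ p k = t ∧ (∀ i ≤ k, p i ∈ V) ∧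
    ∀ i < k, hammingAdj (p i) (p (i + 1))}

/-- The coordinate-doubling map. -/
def doubleList : List Bool → List Bool
  | [] => []
  | a :: s => a :: a :: doubleList s

/-- The coordinate-quadrupling map. -/
def quadList : List Bool → List Bool
  | [] => []
  | a :: s => a :: a :: a :: a :: quadList s

/-- The vertex set of the `n`-th diamond graph `D_n ⊆ {0,1}^{2^n}`. -/
def diamondSet : ℕ → Set (List Bool)
  | 0 => {[false], [true]}
  | n + 1 =>
    (doubleList '' diamondSet n) ∪
      {s | s.length = 2 ^ (n + 1) ∧ ∃ t ∈ doubleList '' diamondSet n, hammingAdj s t}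

/-- The six-vertex Laakso gadget. -/
def laaksoGadget : Set (List Bool) :=
  {[true, true, true, true], [true, true, false, true], [true, true, false, false],
    [false, true, false, true], [false, true, false, false], [false, false, false, false]}

/-- The vertex set of the `n`-th Laakso graph `L_n ⊆ {0,1}^{4^n}`. -/
def laaksoSet : ℕ → Set (List Bool)
  | 0 => {[false], [true]}
  | n + 1 =>
    (quadList '' laaksoSet n) ∪
      {w | ∃ u v : List Bool, (u ++ [false] ++ v) ∈ laaksoSet n ∧
        (u ++ [true] ++ v) ∈ laaksoSet n ∧
        ∃ g ∈ laaksoGadget, w = quadList u ++ g ++ quadList v}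

/-!
Write `δ = δ(1/D)`. The copy of `D_{j+1}` spanned by an edge of `D_{n-j-1}` is a rhombus whose four
sides are copies of `D_j` and whose middle vertices are at graph distance `2^(j+1)`, so their images
under `A ∘ f` are at distance at least `2^(j+1)/D`. Uniform convexity of `A` then makes the image
of the other diagonal shorter than the trivial bound by the factor `1 - δ`. By induction on `j`,
`‖f t - f b‖ ≤ (2 (1 - δ))^n L`, where `L ≤ 1` is the longest image of an edge; together with
`‖f t - f b‖ ≥ 2^n / D` this gives `D⁻¹ ≤ (1 - δ)^n`, impossible for all `n` when `δ > 0`.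
-/

@[simp]
lemma hammingDist'_nil_left (t : List Bool) : hammingDist' [] t = 0 := by
  simp [hammingDist']

@[simp]
lemma hammingDist'_nil_right (s : List Bool) : hammingDist' s [] = 0 := by
  simp [hammingDist']

@[simp]
lemma hammingDist'_cons_cons (a b : Bool) (s t : List Bool) :
    hammingDist' (a :: s) (b :: t) = (if a = b then 0 else 1) + hammingDist' s t := by
  by_cases h : a = b <;> simp [hammingDist', h]
  omega

@[simp]
lemma hammingDist'_self (s : List Bool) : hammingDist' s s = 0 := by
  induction s <;> simp [*]

lemma hammingDist'_comm (s t : List Bool) : hammingDist' s t = hammingDist' t s := by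
  induction s generalizing t with
  | nil => simp
  | cons a s ih => cases t <;> simp [ih, eq_comm]

lemma eq_of_hammingDist'_eq_zero {s t : List Bool} (hl : s.length = t.length)
    (h : hammingDist' s t = 0) : s = t := by
  induction s generalizing t with
  | nil => exact (List.length_eq_zero_iff.mp hl.symm).symm
  | cons a s ih =>
    cases t with
    | nil => simp at hl
    | cons b t =>
      by_cases hab : a = b
      · rw [hab, ih (by simpa using hl) (by simpa [hab] using h)]
      · simp [hab] at h

lemma hammingDist'_triangle {s t : List Bool} (u : List Bool) (hl : s.length = t.length) :
    hammingDist' s u ≤ hammingDist' s t + hammingDist' t u := by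
  induction s generalizing t u with
  | nil => simp
  | cons a s ih =>
    obtain _ | ⟨b, t⟩ := t
    · simp at hl
    obtain _ | ⟨c, u⟩ := u
    · simp
    have := ih u (t := t) (by simpa using hl)
    cases a <;> cases b <;> cases c <;> simp <;> omega

lemma hammingAdj.symm {s t : List Bool} (h : hammingAdj s t) : hammingAdj t s :=
  ⟨h.1.symm, hammingDist'_comm s t ▸ h.2⟩

lemma length_doubleList (s : List Bool) : (doubleList s).length = 2 * s.length := by
  induction s with
  | nil => rfl
  | cons a s ih => simp [doubleList, ih]; ring

lemma hammingDist'_doubleList (s t : List Bool) :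
    hammingDist' (doubleList s) (doubleList t) = 2 * hammingDist' s t := by
  induction s generalizing t with
  | nil => simp [doubleList]
  | cons a s ih =>
    cases t with
    | nil => simp [doubleList]
    | cons b t =>
      by_cases h : a = b <;> simp [doubleList, ih, h]
      omega

lemma hammingDist'_iterate_doubleList (j : ℕ) (s t : List Bool) :
    hammingDist' (doubleList^[j] s) (doubleList^[j] t) = 2 ^ j * hammingDist' s t := by
  induction j generalizing s t with
  | zero => simp
  | succ j ih => rw [Function.iterate_succ_apply, Function.iterate_succ_apply, ih,
      hammingDist'_doubleList]; ring

lemma doubleList_replicate (k : ℕ) (c : Bool) :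
    doubleList (List.replicate k c) = List.replicate (2 * k) c := by
  induction k with
  | zero => rfl
  | succ k ih => simp [List.replicate_succ, doubleList, ih, mul_add]

lemma iterate_doubleList_singleton (j : ℕ) (c : Bool) :
    doubleList^[j] [c] = List.replicate (2 ^ j) c := by
  induction j with
  | zero => rfl
  | succ j ih => rw [Function.iterate_succ_apply', ih, doubleList_replicate, pow_succ']

/-- `u` and `v` are the two middle vertices of the diamond that replaces the edge `s t`. -/
lemma exists_common_neighbours_doubleList {s t : List Bool} (h : hammingAdj s t) :
    ∃ u v : List Bool, hammingAdj (doubleList s) u ∧ hammingAdj u (doubleList t) ∧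
      hammingAdj (doubleList s) v ∧ hammingAdj v (doubleList t) ∧ hammingDist' u v = 2 := by
  obtain ⟨hl, h⟩ := h
  induction s generalizing t with
  | nil => cases t <;> simp_all
  | cons a s ih =>
    obtain _ | ⟨b, t⟩ := t
    · simp at hl
    by_cases hab : a = b
    · subst hab
      obtain ⟨u, v, hsu, hut, hsv, hvt, huv⟩ := ih (by simpa using hl) (by simpa using h)
      refine ⟨a :: a :: u, a :: a :: v, ?_, ?_, ?_, ?_, ?_⟩ <;>
        simp_all [hammingAdj, doubleList]
    · obtain rfl : s = t := eq_of_hammingDist'_eq_zero (by simpa using hl) (by simpa [hab] using h)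
      refine ⟨b :: a :: doubleList s, a :: b :: doubleList s, ?_, ?_, ?_, ?_, ?_⟩ <;>
        cases a <;> cases b <;> simp_all [hammingAdj, doubleList]

lemma length_of_mem_diamondSet {n : ℕ} {s : List Bool} (h : s ∈ diamondSet n) :
    s.length = 2 ^ n := by
  induction n generalizing s with
  | zero => rcases h with rfl | rfl <;> rfl
  | succ n ih =>
    rcases h with ⟨t, ht, rfl⟩ | ⟨hl, -⟩
    · rw [length_doubleList, ih ht, pow_succ']
    · exact hl

lemma finite_diamondSet (n : ℕ) : (diamondSet n).Finite :=
  (List.finite_length_eq Bool (2 ^ n)).subset fun _ ↦ length_of_mem_diamondSet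

lemma singleton_mem_diamondSet_zero (c : Bool) : [c] ∈ diamondSet 0 := by
  cases c <;> simp [diamondSet]

lemma doubleList_mem_diamondSet {n : ℕ} {s : List Bool} (h : s ∈ diamondSet n) :
    doubleList s ∈ diamondSet (n + 1) :=
  Or.inl ⟨s, h, rfl⟩

lemma mem_diamondSet_of_hammingAdj_doubleList {n : ℕ} {s u : List Bool}
    (hs : s ∈ diamondSet n) (h : hammingAdj (doubleList s) u) : u ∈ diamondSet (n + 1) := by
  refine Or.inr ⟨?_, doubleList s, ⟨s, hs, rfl⟩, h.symm⟩
  rw [← h.1, length_doubleList, length_of_mem_diamondSet hs, pow_succ']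

lemma iterate_doubleList_mem_diamondSet {m : ℕ} (j : ℕ) {s : List Bool}
    (h : s ∈ diamondSet m) : doubleList^[j] s ∈ diamondSet (m + j) := by
  induction j with
  | zero => exact h
  | succ j ih =>
    rw [Function.iterate_succ_apply']
    exact doubleList_mem_diamondSet ih

/-- `graphDist V s t` is the least `k` such that `IsHammingWalk V k s t`. -/
def IsHammingWalk (V : Set (List Bool)) (k : ℕ) (s t : List Bool) : Prop :=
  ∃ p : ℕ → List Bool, p 0 = s ∧ p k = t ∧ (∀ i ≤ k, p i ∈ V) ∧
    ∀ i < k, hammingAdj (p i) (p (i + 1))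

namespace IsHammingWalk

variable {V : Set (List Bool)} {k l : ℕ} {s t u : List Bool}

lemma single (hs : s ∈ V) (ht : t ∈ V) (h : hammingAdj s t) : IsHammingWalk V 1 s t := by
  refine ⟨fun i ↦ if i = 0 then s else t, rfl, rfl, fun i _ ↦ ?_, fun i hi ↦ ?_⟩
  · dsimp only
    split_ifs <;> assumption
  · obtain rfl : i = 0 := by omega
    exact h

lemma append (h₁ : IsHammingWalk V k s t) (h₂ : IsHammingWalk V l t u) :
    IsHammingWalk V (k + l) s u := by
  obtain ⟨p, rfl, rfl, hpV, hp⟩ := h₁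
  obtain ⟨q, hq0, rfl, hqV, hq⟩ := h₂
  refine ⟨fun i ↦ if i ≤ k then p i else q (i - k), by simp, ?_, fun i hi ↦ ?_, fun i hi ↦ ?_⟩
  · by_cases hl : l = 0
    · simp [hl, hq0]
    · simp [show ¬ k + l ≤ k by omega]
  · dsimp only
    split_ifs with hik
    · exact hpV i hik
    · exact hqV (i - k) (by omega)
  · rcases Nat.lt_or_ge i k with hik | hik
    · simpa [hik.le, Nat.succ_le_of_lt hik] using hp i hik
    · by_cases hki : k = i
      · subst hki
        simpa [hq0] using hq 0 (by omega)
      · simpa [show ¬ i ≤ k by omega, show ¬ i < k by omega, show i + 1 - k = i - k + 1 by omega]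
          using hq (i - k) (by omega)

lemma hammingDist'_le (h : IsHammingWalk V k s t) : hammingDist' s t ≤ k := by
  obtain ⟨p, rfl, rfl, -, hp⟩ := h
  suffices ∀ i ≤ k, hammingDist' (p 0) (p i) ≤ i ∧ (p 0).length = (p i).length from
    (this k le_rfl).1
  intro i hi
  induction i with
  | zero => simp
  | succ i ih =>
    obtain ⟨hd, hl⟩ := ih (by omega)
    obtain ⟨hl', hd'⟩ := hp i (by omega)
    exact ⟨(hammingDist'_triangle _ hl).trans (by omega), hl.trans hl'⟩

lemma exists_hammingAdj (h : IsHammingWalk V k s t) (hk : 0 < k) :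
    ∃ e e', e ∈ V ∧ e' ∈ V ∧ hammingAdj e e' := by
  obtain ⟨p, -, -, hpV, hp⟩ := h
  exact ⟨p 0, p 1, hpV 0 (by omega), hpV 1 hk, hp 0 hk⟩

end IsHammingWalk

lemma graphDist_le_of_isHammingWalk {V : Set (List Bool)} {k : ℕ} {s t : List Bool}
    (h : IsHammingWalk V k s t) : graphDist V s t ≤ k :=
  Nat.sInf_le h

lemma hammingDist'_le_graphDist {V : Set (List Bool)} {k : ℕ} {s t : List Bool}
    (h : IsHammingWalk V k s t) : hammingDist' s t ≤ graphDist V s t :=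
  le_csInf ⟨k, h⟩ fun _ hl ↦ IsHammingWalk.hammingDist'_le hl

lemma isHammingWalk_iterate_doubleList {m : ℕ} (j : ℕ) {a b : List Bool}
    (ha : a ∈ diamondSet m) (hb : b ∈ diamondSet m) (h : hammingAdj a b) :
    IsHammingWalk (diamondSet (m + j)) (2 ^ j) (doubleList^[j] a) (doubleList^[j] b) := by
  induction j generalizing m a b with
  | zero => exact .single ha hb h
  | succ j ih =>
    obtain ⟨u, -, hau, hub, -⟩ := exists_common_neighbours_doubleList h
    have hu := mem_diamondSet_of_hammingAdj_doubleList ha hau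
    rw [show m + (j + 1) = m + 1 + j by omega, pow_succ, mul_two,
      Function.iterate_succ_apply, Function.iterate_succ_apply]
    exact (ih (doubleList_mem_diamondSet ha) hu hau).append
      (ih hu (doubleList_mem_diamondSet hb) hub)

lemma isHammingWalk_top_bottom (n : ℕ) :
    IsHammingWalk (diamondSet n) (2 ^ n) (List.replicate (2 ^ n) true)
      (List.replicate (2 ^ n) false) := by
  simpa [iterate_doubleList_singleton] using
    isHammingWalk_iterate_doubleList (m := 0) n (a := [true]) (b := [false])
      (singleton_mem_diamondSet_zero true) (singleton_mem_diamondSet_zero false) ⟨rfl, rfl⟩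

lemma hammingDist'_replicate (k : ℕ) :
    hammingDist' (List.replicate k true) (List.replicate k false) = k := by
  induction k with
  | zero => rfl
  | succ k ih => simp [List.replicate_succ, ih, add_comm]

section ConvMod

variable {X Y : Type*} [NormedAddCommGroup X] [NormedSpace ℝ X]
  [NormedAddCommGroup Y] [NormedSpace ℝ Y] (A : X →L[ℝ] Y) (ε : ℝ)

lemma one_sub_convMod_nonneg : 0 ≤ 1 - convMod A ε := by
  rw [convMod, sub_sub_cancel]
  exact Real.sSup_nonneg (by rintro _ ⟨x₁, x₂, -, -, -, rfl⟩; positivity)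

lemma convMod_nonneg : 0 ≤ convMod A ε := by
  rw [convMod, sub_nonneg]
  refine Real.sSup_le ?_ zero_le_one
  rintro _ ⟨x₁, x₂, h₁, h₂, -, rfl⟩
  linarith [norm_add_le x₁ x₂]

variable {A ε}

lemma norm_add_div_two_le_one_sub_convMod {x₁ x₂ : X} (h₁ : ‖x₁‖ ≤ 1) (h₂ : ‖x₂‖ ≤ 1)
    (h : ε ≤ ‖A x₁ - A x₂‖ / 2) : ‖x₁ + x₂‖ / 2 ≤ 1 - convMod A ε := by
  rw [convMod, sub_sub_cancel]
  refine le_csSup ⟨1, ?_⟩ ⟨x₁, x₂, h₁, h₂, h, rfl⟩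
  rintro _ ⟨y₁, y₂, hy₁, hy₂, -, rfl⟩
  linarith [norm_add_le y₁ y₂]

/-- The defining property of `convMod`, rescaled to the ball of radius `M`. -/
lemma norm_add_le_of_le_norm_sub {M : ℝ} (hM : 0 < M) {w₁ w₂ : X} (h₁ : ‖w₁‖ ≤ M)
    (h₂ : ‖w₂‖ ≤ M) (h : 2 * M * ε ≤ ‖A (w₁ - w₂)‖) :
    ‖w₁ + w₂‖ ≤ 2 * M * (1 - convMod A ε) := by
  have hscale : ∀ w : X, ‖M⁻¹ • w‖ = ‖w‖ / M := fun w ↦ by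
    rw [norm_smul, Real.norm_of_nonneg (inv_nonneg.mpr hM.le), inv_mul_eq_div]
  have key := norm_add_div_two_le_one_sub_convMod (A := A) (ε := ε) (x₁ := M⁻¹ • w₁)
    (x₂ := M⁻¹ • w₂) (by rw [hscale]; exact div_le_one_of_le₀ h₁ hM.le)
    (by rw [hscale]; exact div_le_one_of_le₀ h₂ hM.le)
    (by rw [← map_sub, ← smul_sub, map_smul, norm_smul,
          Real.norm_of_nonneg (inv_nonneg.mpr hM.le), inv_mul_eq_div, div_div,
          le_div_iff₀ (by positivity)]
        linarith)
  rw [← smul_add, hscale, div_div, div_le_iff₀ (by positivity)] at key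
  linarith

/-- The pairs `(T - U, T - V)` and `(B - U, B - V)` both have difference `V - U`, long under `A`,
so their sums are short; and these sums differ by `2 • (T - B)`. -/
lemma norm_sub_le_of_rhombus {M : ℝ} {T U V B : X} (hTU : ‖T - U‖ ≤ M) (hUB : ‖U - B‖ ≤ M)
    (hTV : ‖T - V‖ ≤ M) (hVB : ‖V - B‖ ≤ M) (hUV : 2 * M * ε ≤ ‖A (U - V)‖) :
    ‖T - B‖ ≤ 2 * M * (1 - convMod A ε) := by
  rcases (norm_nonneg _ |>.trans hTU).eq_or_lt with rfl | hM
  · have := norm_sub_le_norm_sub_add_norm_sub T U B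
    simp only [mul_zero, zero_mul] at hUV ⊢
    linarith [norm_nonneg (T - B)]
  have hUV' : 2 * M * ε ≤ ‖A (V - U)‖ := by rwa [← neg_sub, map_neg, norm_neg]
  have hT := norm_add_le_of_le_norm_sub hM hTU hTV (by rwa [sub_sub_sub_cancel_left])
  have hB := norm_add_le_of_le_norm_sub hM (by rwa [norm_sub_rev]) (by rwa [norm_sub_rev])
    (by rwa [sub_sub_sub_cancel_left] : 2 * M * ε ≤ ‖A ((B - U) - (B - V))‖)
  have hdiag : (T - U + (T - V)) - (B - U + (B - V)) = (2 : ℝ) • (T - B) := by module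
  have := norm_sub_le (T - U + (T - V)) (B - U + (B - V))
  rw [hdiag, norm_smul, Real.norm_two] at this
  linarith

end ConvMod

lemma norm_sub_le_one_of_hammingAdj {X : Type*} [NormedAddCommGroup X] {n : ℕ}
    {f : List Bool → X}
    (hLip : ∀ s s', s ∈ diamondSet n → s' ∈ diamondSet n →
      ‖f s - f s'‖ ≤ (graphDist (diamondSet n) s s' : ℝ))
    {e e' : List Bool} (he : e ∈ diamondSet n) (he' : e' ∈ diamondSet n) (h : hammingAdj e e') :
    ‖f e - f e'‖ ≤ 1 :=
  (hLip e e' he he').trans (by exact_mod_cast graphDist_le_of_isHammingWalk (.single he he' h))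

section Diamond

variable {X Y : Type*} [NormedAddCommGroup X] [NormedSpace ℝ X]
  [NormedAddCommGroup Y] [NormedSpace ℝ Y] {A : X →L[ℝ] Y} {D : ℝ} {n : ℕ} {f : List Bool → X}

/-- The two middle vertices of the outermost diamond are at graph distance `2 ^ (j + 1)`, so
`norm_sub_le_of_rhombus` applies with `M = (2 (1 - δ)) ^ j L ≤ 2 ^ j`. -/
lemma norm_sub_iterate_doubleList_le {L : ℝ} (hD : 0 ≤ D)
    (hlow : ∀ s s', s ∈ diamondSet n → s' ∈ diamondSet n →
      D⁻¹ * (graphDist (diamondSet n) s s' : ℝ) ≤ ‖A (f s) - A (f s')‖)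
    (hL : ∀ e e', e ∈ diamondSet n → e' ∈ diamondSet n → hammingAdj e e' → ‖f e - f e'‖ ≤ L)
    (hL1 : L ≤ 1) {m j : ℕ} (hmj : m + j = n) {a b : List Bool} (ha : a ∈ diamondSet m)
    (hb : b ∈ diamondSet m) (hab : hammingAdj a b) :
    ‖f (doubleList^[j] a) - f (doubleList^[j] b)‖ ≤ (2 * (1 - convMod A (1 / D))) ^ j * L := by
  induction j generalizing m a b with
  | zero =>
    subst hmj
    simpa using hL a b ha hb hab
  | succ j ih =>
    set δ := convMod A (1 / D)
    obtain ⟨u, v, hau, hub, hav, hvb, huv⟩ := exists_common_neighbours_doubleList hab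
    have hmj' : m + 1 + j = n := by omega
    have had := doubleList_mem_diamondSet ha
    have hbd := doubleList_mem_diamondSet hb
    have hu := mem_diamondSet_of_hammingAdj_doubleList ha hau
    have hv := mem_diamondSet_of_hammingAdj_doubleList ha hav
    set M := (2 * (1 - δ)) ^ j * L
    have hM : M ≤ 2 ^ j := by
      have h2δ : 0 ≤ 2 * (1 - δ) := by linarith [one_sub_convMod_nonneg A (1 / D)]
      calc M ≤ (2 * (1 - δ)) ^ j := mul_le_of_le_one_right (by positivity) hL1
        _ ≤ 2 ^ j := pow_le_pow_left₀ h2δ (by linarith [convMod_nonneg A (1 / D)]) j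
    have hwalk : IsHammingWalk (diamondSet n) (2 ^ (j + 1)) (doubleList^[j] u)
        (doubleList^[j] v) := by
      rw [← hmj', pow_succ, mul_two]
      exact (isHammingWalk_iterate_doubleList j hu had hau.symm).append
        (isHammingWalk_iterate_doubleList j had hv hav)
    have hdist : (2 : ℝ) ^ (j + 1) ≤ graphDist (diamondSet n) (doubleList^[j] u)
        (doubleList^[j] v) := by
      have := hammingDist'_le_graphDist hwalk
      rw [hammingDist'_iterate_doubleList, huv, ← pow_succ] at this
      exact_mod_cast this
    have hUV : 2 * M * (1 / D) ≤ ‖A (f (doubleList^[j] u) - f (doubleList^[j] v))‖ := by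
      rw [map_sub]
      refine le_trans ?_ (hlow _ _ (hmj' ▸ iterate_doubleList_mem_diamondSet j hu)
        (hmj' ▸ iterate_doubleList_mem_diamondSet j hv))
      rw [one_div, mul_comm]
      gcongr
      linarith [pow_succ (2 : ℝ) j]
    rw [Function.iterate_succ_apply, Function.iterate_succ_apply]
    calc _ ≤ 2 * M * (1 - δ) :=
          norm_sub_le_of_rhombus (ih hmj' had hu hau) (ih hmj' hu hbd hub)
            (ih hmj' had hv hav) (ih hmj' hv hbd hvb) hUV
      _ = (2 * (1 - δ)) ^ (j + 1) * L := by ring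

lemma exists_hammingAdj_norm_top_sub_bottom_le (hD : 0 ≤ D)
    (hlow : ∀ s s', s ∈ diamondSet n → s' ∈ diamondSet n →
      D⁻¹ * (graphDist (diamondSet n) s s' : ℝ) ≤ ‖A (f s) - A (f s')‖)
    (hLip : ∀ s s', s ∈ diamondSet n → s' ∈ diamondSet n →
      ‖f s - f s'‖ ≤ (graphDist (diamondSet n) s s' : ℝ)) :
    ∃ s s', s ∈ diamondSet n ∧ s' ∈ diamondSet n ∧ hammingAdj s s' ∧
      ‖f (List.replicate (2 ^ n) true) - f (List.replicate (2 ^ n) false)‖ ≤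
        2 ^ n * (1 - convMod A (1 / D)) ^ n * ‖f s - f s'‖ := by
  let edges := {p : List Bool × List Bool | p.1 ∈ diamondSet n ∧ p.2 ∈ diamondSet n ∧
    hammingAdj p.1 p.2}
  have hfin : edges.Finite :=
    ((finite_diamondSet n).prod (finite_diamondSet n)).subset fun p hp ↦ ⟨hp.1, hp.2.1⟩
  obtain ⟨e, e', he, he', hee⟩ := (isHammingWalk_top_bottom n).exists_hammingAdj (by positivity)
  obtain ⟨⟨s, s'⟩, ⟨hs, hs', hss⟩, hmax⟩ :=
    Set.exists_max_image edges (fun p ↦ ‖f p.1 - f p.2‖) hfin ⟨(e, e'), he, he', hee⟩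
  refine ⟨s, s', hs, hs', hss, ?_⟩
  have := norm_sub_iterate_doubleList_le hD hlow (fun e e' he he' hee ↦ hmax (e, e') ⟨he, he', hee⟩)
    (norm_sub_le_one_of_hammingAdj hLip hs hs' hss) (zero_add n)
    (singleton_mem_diamondSet_zero true) (singleton_mem_diamondSet_zero false) ⟨rfl, rfl⟩
  rwa [iterate_doubleList_singleton, iterate_doubleList_singleton, mul_pow] at this

lemma inv_le_one_sub_convMod_pow (hD : 0 < D)
    (hf : ∀ s s', s ∈ diamondSet n → s' ∈ diamondSet n →
      D⁻¹ * (graphDist (diamondSet n) s s' : ℝ) ≤ ‖A (f s) - A (f s')‖ ∧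
      ‖A (f s) - A (f s')‖ ≤ ‖f s - f s'‖ ∧
      ‖f s - f s'‖ ≤ (graphDist (diamondSet n) s s' : ℝ)) :
    D⁻¹ ≤ (1 - convMod A (1 / D)) ^ n := by
  have hLip := fun s s' hs hs' ↦ (hf s s' hs hs').2.2
  obtain ⟨s, s', hs, hs', hss, hbound⟩ :=
    exists_hammingAdj_norm_top_sub_bottom_le hD.le (fun s s' hs hs' ↦ (hf s s' hs hs').1) hLip
  have hmem (c : Bool) : List.replicate (2 ^ n) c ∈ diamondSet n := by
    simpa [iterate_doubleList_singleton] using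
      iterate_doubleList_mem_diamondSet n (singleton_mem_diamondSet_zero c)
  have hdist : (2 : ℝ) ^ n ≤ graphDist (diamondSet n) (List.replicate (2 ^ n) true)
      (List.replicate (2 ^ n) false) := by
    have := hammingDist'_le_graphDist (isHammingWalk_top_bottom n)
    rw [hammingDist'_replicate] at this
    exact_mod_cast this
  obtain ⟨hlow, hA, -⟩ := hf _ _ (hmem true) (hmem false)
  have := one_sub_convMod_nonneg A (1 / D)
  have hchain : D⁻¹ * 2 ^ n ≤ (1 - convMod A (1 / D)) ^ n * 2 ^ n := calc
    D⁻¹ * 2 ^ n ≤ D⁻¹ * graphDist (diamondSet n) (List.replicate (2 ^ n) true)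
        (List.replicate (2 ^ n) false) := by gcongr
    _ ≤ 2 ^ n * (1 - convMod A (1 / D)) ^ n * ‖f s - f s'‖ := hlow.trans (hA.trans hbound)
    _ ≤ 2 ^ n * (1 - convMod A (1 / D)) ^ n :=
      mul_le_of_le_one_right (by positivity) (norm_sub_le_one_of_hammingAdj hLip hs hs' hss)
    _ = (1 - convMod A (1 / D)) ^ n * 2 ^ n := mul_comm _ _
  exact le_of_mul_le_mul_right hchain (by positivity)

end Diamond

theorem statement10 :
    (∀ (X Y : Type) [NormedAddCommGroup X] [NormedSpace ℝ X] [CompleteSpace X]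
      [NormedAddCommGroup Y] [NormedSpace ℝ Y] [CompleteSpace Y] (A : X →L[ℝ] Y),
      ‖A‖ ≤ 1 → UniformlyConvexOp A → ∀ D : ℝ, 1 ≤ D → ∀ (n : ℕ) (f : List Bool → X),
      (∀ s s', s ∈ diamondSet n → s' ∈ diamondSet n →
        D⁻¹ * (graphDist (diamondSet n) s s' : ℝ) ≤ ‖A (f s) - A (f s')‖ ∧
        ‖A (f s) - A (f s')‖ ≤ ‖f s - f s'‖ ∧
        ‖f s - f s'‖ ≤ (graphDist (diamondSet n) s s' : ℝ)) →
      (∃ s s', s ∈ diamondSet n ∧ s' ∈ diamondSet n ∧ hammingAdj s s' ∧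
        ‖f (List.replicate (2 ^ n) true) - f (List.replicate (2 ^ n) false)‖ ≤
          2 ^ n * (1 - convMod A (1 / D)) ^ n * ‖f s - f s'‖) ∧
      ((1 - convMod A (1 / D))⁻¹) ^ n ≤ D) ∧
    (∀ (X Y : Type) [NormedAddCommGroup X] [NormedSpace ℝ X] [CompleteSpace X]
      [NormedAddCommGroup Y] [NormedSpace ℝ Y] [CompleteSpace Y] (A : X →L[ℝ] Y),
      ‖A‖ ≤ 1 → UniformlyConvexOp A →
      ¬ ∃ D : ℝ, 1 ≤ D ∧ ∀ n : ℕ, ∃ f : List Bool → X,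
        ∀ s s', s ∈ diamondSet n → s' ∈ diamondSet n →
          D⁻¹ * (graphDist (diamondSet n) s s' : ℝ) ≤ ‖A (f s) - A (f s')‖ ∧
          ‖A (f s) - A (f s')‖ ≤ ‖f s - f s'‖ ∧
          ‖f s - f s'‖ ≤ (graphDist (diamondSet n) s s' : ℝ)) := by
  refine ⟨fun X Y _ _ _ _ _ _ A _ _ D hD n f hf ↦ ⟨?_, ?_⟩, ?_⟩
  · exact exists_hammingAdj_norm_top_sub_bottom_le (by linarith)
      (fun s s' hs hs' ↦ (hf s s' hs hs').1) (fun s s' hs hs' ↦ (hf s s' hs hs').2.2)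
  · have hD0 : 0 < D := by linarith
    simpa [inv_pow] using inv_anti₀ (inv_pos.2 hD0) (inv_le_one_sub_convMod_pow hD0 hf)
  · rintro X Y _ _ _ _ _ _ A _ hA ⟨D, hD, hall⟩
    have hD0 : 0 < D := by linarith
    obtain ⟨k, hk⟩ :=
      exists_pow_lt_of_lt_one (inv_pos.2 hD0) (sub_lt_self 1 (hA (1 / D) (by positivity)))
    obtain ⟨f, hf⟩ := hall k
    exact hk.not_ge (inv_le_one_sub_convMod_pow hD0 hf)
end
end
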